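/- For every integer k ≥ 2, every deterministic online algorithm for the k-Server with Preferences Problem on the uniform metric on a set of k+1 points has competitive ratio at least 2k−1; that is, for every real c' < 2k−1 and every real a there exist an initial configuration and a request sequence σ such that the algorithm's cost on σ is strictly greater than c'·OPT(σ) + a. -/

import Mathlib

/-!
Framework for the k-Server with Preferences Problem.

Servers are indexed by a type `K`, points of the metric space by a type `P`,
and the distance is given by a function `d : P → P → ℝ`.

A request is either general (any server may serve it) or specific
(a designated server must serve it).  A configuration assigns to each
server a point.  A deterministic online algorithm maps the initial
configuration together with the list of requests seen so far to its
current configuration; its cost is the total distance travelled.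
`OPT` is the infimum cost over all offline sequences of configurations
serving the requests in order, starting from the same initial
configuration.
-/

namespace KServerPref

inductive Request (K P : Type) where
  | general (v : P) : Request K P
  | specific (j : K) (v : P) : Request K P

variable {K P : Type}

/-- The point at which a request appears. -/
def Request.point : Request K P → P
  | .general v => v
  | .specific _ v => v

/-- Whether a request is specific. -/
def Request.isSpec : Request K P → Bool
  | .general _ => false
  | .specific _ _ => true

/-- A configuration `cfg` serves a request. -/
def Serves (cfg : K → P) : Request K P → Prop
  | .general v => ∃ j, cfg j = v
  | .specific j v => cfg j = v

instance instDecidableServes [Fintype K] [DecidableEq P] (cfg : K → P) :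
    (r : Request K P) → Decidable (Serves cfg r)
  | .general v => inferInstanceAs (Decidable (∃ j, cfg j = v))
  | .specific j v => inferInstanceAs (Decidable (cfg j = v))

/-- A deterministic online algorithm: maps the initial configuration and the
history of requests received so far to the current configuration. -/
def Alg (K P : Type) := (K → P) → List (Request K P) → (K → P)

/-- The algorithm starts in the initial configuration, and after each request
arrives it is in a configuration serving that request. -/
def IsOnline (A : Alg K P) : Prop :=
  (∀ c₀, A c₀ [] = c₀) ∧
  ∀ (c₀ : K → P) (l : List (Request K P)) (r : Request K P),
    Serves (A c₀ (l ++ [r])) r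

/-- Total distance travelled when going from configuration `c` to `c'`. -/
def configCost [Fintype K] (d : P → P → ℝ) (c c' : K → P) : ℝ :=
  ∑ j, d (c j) (c' j)

/-- Total movement cost of the online algorithm `A` on the request sequence `σ`
starting from the initial configuration `c₀`. -/
def algCost [Fintype K] (d : P → P → ℝ) (A : Alg K P) (c₀ : K → P)
    (σ : List (Request K P)) : ℝ :=
  ∑ i ∈ Finset.range σ.length,
    configCost d (A c₀ (σ.take i)) (A c₀ (σ.take (i + 1)))

/-- An offline sequence of configurations `os` starts at `c₀` and serves the
requests of `σ` in order. -/
def ServesSeq (c₀ : K → P) (σ : List (Request K P)) (os : ℕ → K → P) : Prop :=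
  os 0 = c₀ ∧ ∀ i : Fin σ.length, Serves (os (i.1 + 1)) (σ.get i)

/-- Total movement cost of an offline sequence of configurations on `σ`. -/
def offlineCost [Fintype K] (d : P → P → ℝ) (σ : List (Request K P))
    (os : ℕ → K → P) : ℝ :=
  ∑ i ∈ Finset.range σ.length, configCost d (os i) (os (i + 1))

/-- The optimal offline cost on `σ`, starting from `c₀`. -/
noncomputable def OPT [Fintype K] (d : P → P → ℝ) (c₀ : K → P)
    (σ : List (Request K P)) : ℝ :=
  sInf {x | ∃ os, ServesSeq c₀ σ os ∧ offlineCost d σ os = x}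

/-- The uniform metric: distance `1` between any two distinct points. -/
def unif [DecidableEq P] (x y : P) : ℝ := if x = y then 0 else 1

end KServerPref

namespace KServerPref

section LB

open Finset

variable {k : ℕ}

abbrev Req (k : ℕ) := Request (Fin k) (Fin (k+1))
abbrev Cfg (k : ℕ) := Fin k → Fin (k+1)

/-! ### basic facts about the uniform metric and configuration costs -/

lemma unif_nonneg {P : Type} [DecidableEq P] (x y : P) : (0:ℝ) ≤ unif x y := by
  unfold unif; split <;> norm_num

lemma unif_triangle {P : Type} [DecidableEq P] (x y z : P) :
    unif x z ≤ unif x y + unif y z := by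
  unfold unif; split_ifs <;> simp_all <;> norm_num

lemma unif_le_one {P : Type} [DecidableEq P] (x y : P) : unif x y ≤ 1 := by
  unfold unif; split <;> norm_num

lemma configCost_nonneg {K P : Type} [Fintype K] [DecidableEq P] (c c' : K → P) :
    0 ≤ configCost unif c c' :=
  Finset.sum_nonneg fun _ _ => unif_nonneg _ _

lemma configCost_self {K P : Type} [Fintype K] [DecidableEq P] (c : K → P) :
    configCost unif c c = 0 := by
  simp [configCost, unif]

lemma configCost_triangle {K P : Type} [Fintype K] [DecidableEq P] (c c' c'' : K → P) :
    configCost unif c c'' ≤ configCost unif c c' + configCost unif c' c'' := by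
  rw [configCost, configCost, configCost, ← Finset.sum_add_distrib]
  exact Finset.sum_le_sum fun i _ => unif_triangle _ _ _

lemma one_le_configCost {K P : Type} [Fintype K] [DecidableEq P] {c c' : K → P}
    (j : K) (h : c j ≠ c' j) : 1 ≤ configCost unif c c' := by
  have h1 : unif (c j) (c' j) = 1 := by simp [unif, h]
  calc (1:ℝ) = unif (c j) (c' j) := h1.symm
    _ ≤ configCost unif c c' :=
      Finset.single_le_sum (f := fun i => unif (c i) (c' i))
        (fun i _ => unif_nonneg _ _) (Finset.mem_univ j)

lemma configCost_update_le {K P : Type} [Fintype K] [DecidableEq K] [DecidableEq P]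
    (c : K → P) (j : K) (v : P) : configCost unif c (Function.update c j v) ≤ 1 := by
  rw [configCost]
  rw [Finset.sum_eq_single j]
  · exact unif_le_one _ _
  · intro i _ hi
    rw [Function.update_of_ne hi]
    simp [unif]
  · intro h; exact absurd (Finset.mem_univ j) h

/-! ### the adversary state -/

/-- default request / config -/
def rq0 : Req k := .general 0
def cf0 : Cfg k := fun _ => 0

/-- the initial configuration: server `i` on point `i`. -/
def c0 : Cfg k := fun i => i.castSucc

structure St (k : ℕ) where
  hist : List (Req k)
  cfg : Cfg k
  hole : Fin (k+1)
  S : Finset (Fin k)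
  oplan : List (Cfg k)

variable [NeZero k] (A : Alg (Fin k) (Fin (k+1)))

/-- online config after the current history -/
def xc (st : St k) : Cfg k := A c0 st.hist

def afford (st : St k) (i : Fin k) : Prop := (insert i st.S).card < k

instance (st : St k) (i : Fin k) : Decidable (afford st i) := by
  unfold afford; infer_instance

noncomputable def stepReq (st : St k) : Option (Req k) :=
  if h : ∃ i, afford st i ∧ xc A st i ≠ st.cfg i then
    some (.specific h.choose (st.cfg h.choose))
  else if ∃ j, xc A st j = st.hole then none
  else some (.general st.hole)

noncomputable def j0 (st : St k) : Fin k :=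
  if h : st.Sᶜ.Nonempty then h.choose else ⟨0, Nat.pos_of_ne_zero (NeZero.ne k)⟩

lemma j0_not_mem {st : St k} (h : st.S.card < k) : j0 st ∉ st.S := by
  have hne : st.Sᶜ.Nonempty := by
    rw [← Finset.card_pos, Finset.card_compl]
    simp only [Fintype.card_fin]
    omega
  have := hne.choose_spec
  rw [Finset.mem_compl] at this
  unfold j0
  rw [dif_pos hne]
  exact this

noncomputable def endPh (st : St k) : St k :=
  { hist := st.hist
    cfg := Function.update st.cfg (j0 st) st.hole
    hole := st.cfg (j0 st)
    S := ∅
    oplan := st.oplan ++ List.replicate (st.hist.length - st.oplan.length)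
      (Function.update st.cfg (j0 st) st.hole) }

def newS (S : Finset (Fin k)) : Req k → Finset (Fin k)
  | .specific i _ => insert i S
  | .general _ => S

def doStep (st : St k) (r : Req k) : St k :=
  { st with hist := st.hist ++ [r], S := newS st.S r }

noncomputable def phase : ℕ → St k → St k
  | 0, st => endPh st
  | (f+1), st =>
    match stepReq A st with
    | none => endPh st
    | some r => phase f (doStep st r)

def initSt : St k := ⟨[], c0, Fin.last k, ∅, []⟩

noncomputable def run : ℕ → St k
  | 0 => initSt
  | (n+1) => phase A (4*k) (run n)

/-! ### step request inversion -/

lemma stepReq_specific {st : St k} {i : Fin k} {v : Fin (k+1)}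
    (h : stepReq A st = some (.specific i v)) :
    afford st i ∧ xc A st i ≠ st.cfg i ∧ v = st.cfg i := by
  unfold stepReq at h
  split_ifs at h with h1 h2
  · obtain ⟨h3, h4⟩ := h1.choose_spec
    simp only [Option.some.injEq, Request.specific.injEq] at h
    obtain ⟨h5, h6⟩ := h
    subst h5; subst h6
    exact ⟨h3, h4, rfl⟩
  · simp at h

lemma stepReq_general {st : St k} {v : Fin (k+1)}
    (h : stepReq A st = some (.general v)) :
    v = st.hole ∧ ∀ j, xc A st j ≠ st.hole := by
  unfold stepReq at h
  split_ifs at h with h1 h2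
  · simp at h
  · simp only [Option.some.injEq, Request.general.injEq] at h
    subst h
    exact ⟨rfl, fun j hj => h2 ⟨j, hj⟩⟩

lemma stepReq_none {st : St k} (h : stepReq A st = none) :
    (∀ i, afford st i → xc A st i = st.cfg i) ∧ ∃ j, xc A st j = st.hole := by
  unfold stepReq at h
  split_ifs at h with h1 h2
  · push_neg at h1
    exact ⟨h1, h2⟩

/-! ### the invariant -/

structure Inv (st : St k) : Prop where
  inj : Function.Injective st.cfg
  hole : ∀ i, st.cfg i ≠ st.hole
  scard : st.S.card < k
  olen : st.oplan.length ≤ st.hist.length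
  serve : ∀ t, t < st.oplan.length → Serves (st.oplan.getD t cf0) (st.hist.getD t rq0)
  allow : ∀ t, st.oplan.length ≤ t → t < st.hist.length →
    st.hist.getD t rq0 = .general st.hole ∨
    ∃ i ∈ st.S, st.hist.getD t rq0 = .specific i (st.cfg i)

lemma inv_initSt : Inv (initSt : St k) := by
  constructor
  · exact fun a b h => Fin.castSucc_injective k h
  · exact fun i => (Fin.castSucc_lt_last i).ne
  · simpa [initSt] using Nat.pos_of_ne_zero (NeZero.ne k)
  · simp [initSt]
  · intro t ht; simp [initSt] at ht
  · intro t h1 h2; simp [initSt] at h2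

lemma inv_doStep {st : St k} {r : Req k} (hinv : Inv st)
    (hr : stepReq A st = some r) : Inv (doStep st r) := by
  have hS : st.S ⊆ (doStep st r).S := by
    cases r <;> simp [doStep, newS, Finset.subset_insert]
  have hcard : (doStep st r).S.card < k := by
    cases r with
    | general v => exact hinv.scard
    | specific i v =>
      exact (stepReq_specific A hr).1
  constructor
  · exact hinv.inj
  · exact hinv.hole
  · exact hcard
  · simp only [doStep, List.length_append, List.length_singleton]
    exact le_trans hinv.olen (Nat.le_succ _)
  · intro t ht
    have ht' : t < st.hist.length := lt_of_lt_of_le ht hinv.olen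
    simp only [doStep]
    rw [List.getD_append _ _ _ _ ht']
    exact hinv.serve t ht
  · intro t h1 h2
    simp only [doStep, List.length_append, List.length_singleton] at h2 ⊢
    rcases Nat.lt_or_ge t st.hist.length with hlt | hge
    · rw [List.getD_append _ _ _ _ hlt]
      rcases hinv.allow t h1 hlt with h | ⟨i, hi, hsh⟩
      · exact Or.inl h
      · exact Or.inr ⟨i, hS hi, hsh⟩
    · have hteq : t = st.hist.length := by omega
      rw [List.getD_append_right _ _ _ _ hge, hteq, Nat.sub_self]
      simp only [List.getD_cons_zero]
      cases r with
      | general v =>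
        left
        rw [(stepReq_general A hr).1]
      | specific i v =>
        right
        refine ⟨i, ?_, ?_⟩
        · simp [doStep, newS]
        · rw [(stepReq_specific A hr).2.2]

lemma endPh_hist (st : St k) : (endPh st).hist = st.hist := rfl
lemma endPh_cfg (st : St k) : (endPh st).cfg = Function.update st.cfg (j0 st) st.hole := rfl
lemma endPh_hole (st : St k) : (endPh st).hole = st.cfg (j0 st) := rfl
lemma endPh_S (st : St k) : (endPh st).S = ∅ := rfl
lemma endPh_oplan (st : St k) : (endPh st).oplan
    = st.oplan ++ List.replicate (st.hist.length - st.oplan.length)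
        (Function.update st.cfg (j0 st) st.hole) := rfl

lemma inv_endPh {st : St k} (hinv : Inv st) : Inv (endPh st) := by
  have hj0 : j0 st ∉ st.S := j0_not_mem hinv.scard
  have holen := hinv.olen
  have hncj : Function.update st.cfg (j0 st) st.hole (j0 st) = st.hole :=
    Function.update_self _ _ _
  have hnci : ∀ i, i ≠ j0 st → Function.update st.cfg (j0 st) st.hole i = st.cfg i :=
    fun i hi => Function.update_of_ne hi _ _
  constructor
  · intro a b hab
    rw [endPh_cfg] at hab
    by_cases ha : a = j0 st <;> by_cases hb : b = j0 st
    · rw [ha, hb]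
    · rw [ha, hncj, hnci b hb] at hab
      exact absurd hab.symm (hinv.hole b)
    · rw [hb, hncj, hnci a ha] at hab
      exact absurd hab (hinv.hole a)
    · rw [hnci a ha, hnci b hb] at hab
      exact hinv.inj hab
  · intro i
    rw [endPh_cfg, endPh_hole]
    by_cases hi : i = j0 st
    · rw [hi, hncj]
      exact fun hh => hinv.hole (j0 st) hh.symm
    · rw [hnci i hi]
      exact fun hh => hi (hinv.inj hh)
  · rw [endPh_S]
    simpa using Nat.pos_of_ne_zero (NeZero.ne k)
  · rw [endPh_oplan, endPh_hist, List.length_append, List.length_replicate]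
    omega
  · intro t ht
    rw [endPh_oplan, List.length_append, List.length_replicate] at ht
    rw [endPh_oplan, endPh_hist]
    have ht2 : t < st.hist.length := by omega
    rcases Nat.lt_or_ge t st.oplan.length with hlt | hge
    · rw [List.getD_append _ _ _ _ hlt]
      exact hinv.serve t hlt
    · rw [List.getD_append_right _ _ _ _ hge]
      have hrep : (List.replicate (st.hist.length - st.oplan.length)
          (Function.update st.cfg (j0 st) st.hole)).getD
          (t - st.oplan.length) cf0 = Function.update st.cfg (j0 st) st.hole := by
        rw [List.getD_eq_getElem]
        · apply List.getElem_replicate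
        · simp only [List.length_replicate]; omega
      rw [hrep]
      rcases hinv.allow t hge ht2 with h | ⟨i, hi, hsh⟩
      · rw [h]
        exact ⟨j0 st, hncj⟩
      · rw [hsh]
        show Function.update st.cfg (j0 st) st.hole i = st.cfg i
        exact hnci i (fun hij => hj0 (hij ▸ hi))
  · intro t h1 h2
    rw [endPh_oplan, List.length_append, List.length_replicate] at h1
    rw [endPh_hist] at h2
    omega

/-! ### structural lemmas about phases and runs -/

lemma doStep_hist (st : St k) (r : Req k) : (doStep st r).hist = st.hist ++ [r] := rfl

lemma phase_hist_prefix : ∀ (f : ℕ) (st : St k), st.hist <+: (phase A f st).hist := by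
  intro f
  induction f with
  | zero => intro st; exact List.prefix_refl _
  | succ f ih =>
    intro st
    rw [phase]
    cases hr : stepReq A st with
    | none => exact List.prefix_refl _
    | some r =>
      refine List.IsPrefix.trans ?_ (ih (doStep st r))
      rw [doStep_hist]
      exact List.prefix_append _ _

lemma phase_S_empty : ∀ (f : ℕ) (st : St k), (phase A f st).S = ∅ := by
  intro f
  induction f with
  | zero => intro st; rfl
  | succ f ih =>
    intro st
    rw [phase]
    cases hr : stepReq A st with
    | none => rfl
    | some r => exact ih _

lemma inv_phase : ∀ (f : ℕ) (st : St k), Inv st → Inv (phase A f st) := by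
  intro f
  induction f with
  | zero => intro st h; exact inv_endPh h
  | succ f ih =>
    intro st h
    rw [phase]
    cases hr : stepReq A st with
    | none => exact inv_endPh h
    | some r => exact ih _ (inv_doStep A h hr)

lemma inv_run (n : ℕ) : Inv (run A n) := by
  induction n with
  | zero => exact inv_initSt
  | succ n ih => exact inv_phase A _ _ ih

lemma run_hist_prefix {m n : ℕ} (h : m ≤ n) : (run A m).hist <+: (run A n).hist := by
  induction n with
  | zero => simp_all
  | succ n ih =>
    rcases Nat.lt_or_ge m (n+1) with hlt | hge
    · exact (ih (by omega)).trans (phase_hist_prefix A _ _)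
    · have : m = n+1 := by omega
      rw [this]

lemma oplan_len_endPh {st : St k} (hinv : Inv st) :
    (endPh st).oplan.length = (endPh st).hist.length := by
  rw [endPh_oplan, endPh_hist, List.length_append, List.length_replicate]
  have := hinv.olen
  omega

lemma oplan_len_phase : ∀ (f : ℕ) (st : St k), Inv st →
    (phase A f st).oplan.length = (phase A f st).hist.length := by
  intro f
  induction f with
  | zero => intro st h; exact oplan_len_endPh h
  | succ f ih =>
    intro st h
    rw [phase]
    cases hr : stepReq A st with
    | none => exact oplan_len_endPh h
    | some r => exact ih _ (inv_doStep A h hr)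

lemma oplan_len_run (n : ℕ) : (run A n).oplan.length = (run A n).hist.length := by
  cases n with
  | zero => rfl
  | succ n => exact oplan_len_phase A _ _ (inv_run A n)

/-! ### the potential function -/

noncomputable def phi (st : St k) : ℝ :=
  ∑ i, (if i ∈ st.S then (2:ℝ) else if xc A st i = st.cfg i then 0 else 1)

lemma phi_nonneg (st : St k) : 0 ≤ phi A st := by
  apply Finset.sum_nonneg
  intro i _
  split_ifs <;> norm_num

lemma phi_le_k_of_S_empty {st : St k} (h : st.S = ∅) : phi A st ≤ k := by
  calc phi A st ≤ ∑ _i : Fin k, (1:ℝ) := by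
        apply Finset.sum_le_sum
        intro i _
        rw [h]
        simp only [Finset.notMem_empty, if_false]
        split_ifs <;> norm_num
    _ = k := by simp

lemma xc_endPh (st : St k) : xc A (endPh st) = xc A st := rfl

/-- everything that holds when the phase ends by its end condition -/
lemma phi_of_none {st : St k} (hinv : Inv st) (h : stepReq A st = none) :
    phi A st = 2*(k:ℝ) - 1 ∧ phi A (endPh st) = 0 := by
  obtain ⟨hall, j, hj⟩ := stepReq_none A h
  -- the set S has exactly k-1 elements
  have hS1 : st.S.card + 1 = k := by
    rcases Nat.lt_or_ge (st.S.card + 1) k with hlt | hge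
    · exfalso
      have hx : ∀ i, xc A st i = st.cfg i := by
        intro i
        apply hall
        exact lt_of_le_of_lt (Finset.card_insert_le i st.S) hlt
      exact hinv.hole j (by rw [← hx j, hj])
    · have := hinv.scard; omega
  have hxS : ∀ i ∈ st.S, xc A st i = st.cfg i := by
    intro i hi
    apply hall
    unfold afford
    rw [Finset.insert_eq_self.mpr hi]
    exact hinv.scard
  have hjS : j ∉ st.S := by
    intro hjs
    exact hinv.hole j (by rw [← hxS j hjs, hj])
  have hcompl : st.Sᶜ = {j} := by
    have hc : st.Sᶜ.card = 1 := by
      rw [Finset.card_compl, Fintype.card_fin]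
      omega
    obtain ⟨b, hb⟩ := Finset.card_eq_one.mp hc
    have hjb : j ∈ st.Sᶜ := Finset.mem_compl.mpr hjS
    rw [hb] at hjb ⊢
    rw [Finset.mem_singleton] at hjb
    rw [hjb]
  have hj0 : j0 st = j := by
    have := j0_not_mem hinv.scard
    have h2 : j0 st ∈ st.Sᶜ := Finset.mem_compl.mpr this
    rw [hcompl, Finset.mem_singleton] at h2
    exact h2
  have hmem : ∀ i : Fin k, i ∉ st.S → i = j := by
    intro i hi
    have : i ∈ st.Sᶜ := Finset.mem_compl.mpr hi
    rw [hcompl, Finset.mem_singleton] at this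
    exact this
  constructor
  · -- phi st = 2k - 1
    unfold phi
    rw [← Finset.sum_add_sum_compl st.S]
    have e1 : ∑ i ∈ st.S, (if i ∈ st.S then (2:ℝ) else if xc A st i = st.cfg i then 0 else 1)
        = ∑ _i ∈ st.S, (2:ℝ) := by
      apply Finset.sum_congr rfl
      intro i hi
      rw [if_pos hi]
    have e2 : ∑ i ∈ st.Sᶜ, (if i ∈ st.S then (2:ℝ) else if xc A st i = st.cfg i then 0 else 1)
        = 1 := by
      rw [hcompl, Finset.sum_singleton, if_neg hjS, if_neg]
      rw [hj]
      exact fun hh => hinv.hole j hh.symm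
    rw [e1, e2, Finset.sum_const, nsmul_eq_mul]
    have : (st.S.card : ℝ) = (k:ℝ) - 1 := by
      have : ((st.S.card + 1 : ℕ) : ℝ) = k := by rw [hS1]
      push_cast at this
      linarith
    rw [this]
    ring
  · -- phi (endPh st) = 0
    unfold phi
    apply Finset.sum_eq_zero
    intro i _
    rw [endPh_S]
    simp only [Finset.notMem_empty, if_false]
    rw [if_pos]
    rw [xc_endPh, endPh_cfg, hj0]
    by_cases hi : i = j
    · rw [hi, Function.update_self, hj]
    · rw [Function.update_of_ne hi]
      exact hxS i (by
        by_contra hns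
        exact hi (hmem i hns))

/-! ### per-step cost lemmas -/

lemma xc_doStep (st : St k) (r : Req k) : xc A (doStep st r) = A c0 (st.hist ++ [r]) := rfl

lemma step_serves (hA : IsOnline A) (st : St k) (r : Req k) :
    Serves (xc A (doStep st r)) r := by
  rw [xc_doStep]
  exact hA.2 c0 st.hist r

lemma unif_ite_le {P : Type} [DecidableEq P] (x x' c : P) :
    (if x' = c then (0:ℝ) else 1) ≤ (if x = c then (0:ℝ) else 1) + unif x x' := by
  unfold unif
  split_ifs <;> simp_all <;> norm_num

lemma phi_doStep (hA : IsOnline A) {st : St k} {r : Req k} (hr : stepReq A st = some r) :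
    phi A (doStep st r) ≤ phi A st + configCost unif (xc A st) (xc A (doStep st r)) := by
  rw [phi, phi, configCost, ← Finset.sum_add_distrib]
  apply Finset.sum_le_sum
  intro i _
  have hcfg : (doStep st r).cfg = st.cfg := rfl
  rw [hcfg]
  cases r with
  | general v =>
    have hSS : (doStep st (.general v)).S = st.S := rfl
    rw [hSS]
    by_cases hiS : i ∈ st.S
    · rw [if_pos hiS, if_pos hiS]
      have := unif_nonneg (xc A st i) (xc A (doStep st (.general v)) i)
      linarith
    · rw [if_neg hiS, if_neg hiS]
      exact unif_ite_le _ _ _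
  | specific i0 v =>
    obtain ⟨haf, hne, hv⟩ := stepReq_specific A hr
    subst hv
    have hSS : (doStep st (.specific i0 (st.cfg i0))).S = insert i0 st.S := rfl
    rw [hSS]
    by_cases hii : i = i0
    · subst hii
      by_cases hiS : i ∈ st.S
      · rw [if_pos hiS, if_pos (Finset.mem_insert_of_mem hiS)]
        have := unif_nonneg (xc A st i) (xc A (doStep st (.specific i (st.cfg i))) i)
        linarith
      · rw [if_pos (Finset.mem_insert_self i st.S), if_neg hiS, if_neg hne]
        have hserve := step_serves A hA st (.specific i (st.cfg i))
        have hxi : xc A (doStep st (.specific i (st.cfg i))) i = st.cfg i := hserve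
        have hu : unif (xc A st i) (xc A (doStep st (.specific i (st.cfg i))) i) = 1 := by
          unfold unif
          rw [if_neg]
          rw [hxi]
          exact hne
        rw [hu]
        norm_num
    · have hmem : i ∈ insert i0 st.S ↔ i ∈ st.S := by
        simp [Finset.mem_insert, hii]
      by_cases hiS : i ∈ st.S
      · rw [if_pos hiS, if_pos (hmem.mpr hiS)]
        have := unif_nonneg (xc A st i) (xc A (doStep st (.specific i0 (st.cfg i0))) i)
        linarith
      · rw [if_neg hiS, if_neg (fun hh => hiS (hmem.mp hh))]
        exact unif_ite_le _ _ _

lemma one_le_step (hA : IsOnline A) {st : St k} {r : Req k} (hr : stepReq A st = some r) :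
    1 ≤ configCost unif (xc A st) (xc A (doStep st r)) := by
  cases r with
  | general v =>
    obtain ⟨hv, hnone⟩ := stepReq_general A hr
    obtain ⟨j, hj⟩ := step_serves A hA st (.general v)
    apply one_le_configCost j
    rw [hj, hv]
    exact hnone j
  | specific i v =>
    obtain ⟨_, hne, hv⟩ := stepReq_specific A hr
    have hserve := step_serves A hA st (.specific i v)
    apply one_le_configCost i
    rw [hserve, hv]
    exact hne

/-! ### online cost over segments -/

noncomputable def costR (σ : List (Req k)) (a b : ℕ) : ℝ :=
  ∑ t ∈ Finset.Ico a b, configCost unif (A c0 (σ.take t)) (A c0 (σ.take (t+1)))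

lemma costR_nonneg (σ : List (Req k)) (a b : ℕ) : 0 ≤ costR A σ a b :=
  Finset.sum_nonneg fun _ _ => configCost_nonneg _ _

lemma costR_split {a b c : ℕ} (σ : List (Req k)) (hab : a ≤ b) (hbc : b ≤ c) :
    costR A σ a c = costR A σ a b + costR A σ b c :=
  (Finset.sum_Ico_consecutive _ hab hbc).symm

lemma costR_self (σ : List (Req k)) (a : ℕ) : costR A σ a a = 0 := by
  rw [costR, Finset.Ico_self, Finset.sum_empty]

lemma costR_single (σ : List (Req k)) (t : ℕ) :
    costR A σ t (t+1) = configCost unif (A c0 (σ.take t)) (A c0 (σ.take (t+1))) := by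
  rw [costR]
  have he : Finset.Ico t (t+1) = {t} := by
    ext x
    simp only [Finset.mem_Ico, Finset.mem_singleton]
    omega
  rw [he, Finset.sum_singleton]

lemma take_of_prefix {α : Type} {l σ : List α} (h : l <+: σ) : σ.take l.length = l :=
  (List.prefix_iff_eq_take.mp h).symm

/-! ### the main per-phase bound -/

lemma phase_bound (hA : IsOnline A) (σ : List (Req k)) :
    ∀ (f : ℕ) (st : St k), Inv st → (phase A f st).hist <+: σ →
    (2*(k:ℝ) - 1 + phi A (phase A f st) ≤ phi A st
        + costR A σ st.hist.length (phase A f st).hist.length)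
    ∨ ((f : ℝ) ≤ costR A σ st.hist.length (phase A f st).hist.length) := by
  intro f
  induction f with
  | zero =>
    intro st hinv hpre
    right
    simpa using costR_nonneg A σ st.hist.length (phase A 0 st).hist.length
  | succ f ih =>
    intro st hinv hpre
    rw [phase] at hpre ⊢
    cases hr : stepReq A st with
    | none =>
      simp only [hr] at hpre ⊢
      left
      obtain ⟨h1, h2⟩ := phi_of_none A hinv hr
      rw [endPh_hist, costR_self, h1, h2]
    | some r =>
      simp only [hr] at hpre ⊢
      have hinv1 := inv_doStep A hinv hr
      have hp2 : (doStep st r).hist <+: (phase A f (doStep st r)).hist :=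
        phase_hist_prefix A f (doStep st r)
      have hp1 : (doStep st r).hist <+: σ := hp2.trans hpre
      have hp0 : st.hist <+: σ :=
        ((List.prefix_append st.hist [r]).trans hp2).trans hpre
      have hlen1 : (doStep st r).hist.length = st.hist.length + 1 := by
        rw [doStep_hist, List.length_append, List.length_singleton]
      have hstep : costR A σ st.hist.length (st.hist.length + 1)
          = configCost unif (xc A st) (xc A (doStep st r)) := by
        rw [costR_single]
        have e0 : σ.take st.hist.length = st.hist := take_of_prefix hp0
        have e1 : σ.take (st.hist.length + 1) = (doStep st r).hist := by
          rw [← hlen1]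
          exact take_of_prefix hp1
        rw [e0, e1]
        rfl
      have hlen2 : st.hist.length + 1 ≤ (phase A f (doStep st r)).hist.length := by
        rw [← hlen1]
        exact hp2.length_le
      have hsplit : costR A σ st.hist.length (phase A f (doStep st r)).hist.length
          = costR A σ st.hist.length (st.hist.length + 1)
            + costR A σ (st.hist.length + 1) (phase A f (doStep st r)).hist.length := by
        apply costR_split
        · omega
        · exact hlen2
      rcases ih (doStep st r) hinv1 hpre with hL | hR
      · left
        rw [hlen1] at hL
        have hphi := phi_doStep A hA hr
        rw [hsplit, hstep]
        linarith
      · right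
        rw [hlen1] at hR
        have h1 := one_le_step A hA hr
        rw [hsplit, hstep]
        push_cast
        push_cast at hR
        linarith

lemma phase_bound' (hA : IsOnline A) (σ : List (Req k)) (st : St k) (hinv : Inv st)
    (hpre : (phase A (4*k) st).hist <+: σ) :
    2*(k:ℝ) - 1 + phi A (phase A (4*k) st) - phi A st
      ≤ costR A σ st.hist.length (phase A (4*k) st).hist.length := by
  rcases phase_bound A hA σ (4*k) st hinv hpre with h | h
  · linarith
  · have h1 : phi A (phase A (4*k) st) ≤ k :=
      phi_le_k_of_S_empty A (phase_S_empty A _ _)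
    have h2 : 0 ≤ phi A st := phi_nonneg A st
    have h3 : ((4*k : ℕ):ℝ) = 4*(k:ℝ) := by push_cast; ring
    rw [h3] at h
    have hk1 : (1:ℝ) ≤ k := by
      have := Nat.pos_of_ne_zero (NeZero.ne k)
      exact_mod_cast this
    linarith

lemma run_succ (n : ℕ) : run A (n+1) = phase A (4*k) (run A n) := rfl

lemma phi_run_zero (hA : IsOnline A) : phi A (run A (0:ℕ)) = 0 := by
  unfold phi
  apply Finset.sum_eq_zero
  intro i _
  have hS : (run A (0:ℕ)).S = ∅ := rfl
  have hx : xc A (run A (0:ℕ)) = c0 := hA.1 c0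
  have hc : (run A (0:ℕ)).cfg = c0 := rfl
  rw [hS, hx, hc]
  simp

lemma run_bound (hA : IsOnline A) (N : ℕ) : ∀ n, n ≤ N →
    (2*(k:ℝ)-1) * n + phi A (run A n)
      ≤ costR A (run A N).hist 0 (run A n).hist.length := by
  intro n
  induction n with
  | zero =>
    intro _
    have h0 : (run A (0:ℕ)).hist.length = 0 := rfl
    rw [phi_run_zero A hA, h0, costR_self]
    norm_num
  | succ n ih =>
    intro hn
    have hn' : n ≤ N := by omega
    have hpre : (run A (n+1)).hist <+: (run A N).hist := run_hist_prefix A hn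
    have hb := phase_bound' A hA (run A N).hist (run A n) (inv_run A n)
      (by rw [← run_succ]; exact hpre)
    rw [← run_succ] at hb
    have hmono : (run A n).hist.length ≤ (run A (n+1)).hist.length :=
      (run_hist_prefix A (Nat.le_succ n)).length_le
    have hsplit : costR A (run A N).hist 0 (run A (n+1)).hist.length
        = costR A (run A N).hist 0 (run A n).hist.length
          + costR A (run A N).hist (run A n).hist.length (run A (n+1)).hist.length :=
      costR_split A _ (Nat.zero_le _) hmono
    have hIH := ih hn'
    rw [hsplit]
    push_cast
    linarith

/-! ### offline cost accounting -/

def olist (st : St k) : List (Cfg k) := c0 :: st.oplan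

noncomputable def offF (st : St k) : ℝ :=
  ∑ t ∈ Finset.range st.oplan.length,
    configCost unif ((olist st).getD t cf0) ((olist st).getD (t+1) cf0)

def olast (st : St k) : Cfg k := (olist st).getD st.oplan.length cf0

noncomputable def Dst (st : St k) : ℝ := configCost unif (olast st) st.cfg

lemma Dst_nonneg (st : St k) : 0 ≤ Dst st := configCost_nonneg _ _

lemma off_doStep (st : St k) (r : Req k) :
    offF (doStep st r) = offF st ∧ Dst (doStep st r) = Dst st := ⟨rfl, rfl⟩

lemma olist_endPh (st : St k) :
    olist (endPh st) = olist st ++ List.replicate (st.hist.length - st.oplan.length)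
      (Function.update st.cfg (j0 st) st.hole) := by
  rw [olist, olist, endPh_oplan, List.cons_append]

lemma off_endPh {st : St k} (hinv : Inv st) :
    offF (endPh st) + Dst (endPh st) ≤ offF st + Dst st + 1 := by
  set L := st.oplan.length with hL
  set m := st.hist.length - st.oplan.length with hm
  set nc := Function.update st.cfg (j0 st) st.hole with hnc
  have hlen : (olist st).length = L + 1 := by rw [olist]; simp [hL]
  have hople : (endPh st).oplan.length = L + m := by
    rw [endPh_oplan, List.length_append, List.length_replicate]
  have g1 : ∀ t, t ≤ L → (olist (endPh st)).getD t cf0 = (olist st).getD t cf0 := by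
    intro t ht
    rw [olist_endPh]
    exact List.getD_append _ _ _ _ (by omega)
  have g2 : ∀ t, L + 1 ≤ t → t ≤ L + m → (olist (endPh st)).getD t cf0 = nc := by
    intro t h1 h2
    rw [olist_endPh, List.getD_append_right _ _ _ _ (by omega), List.getD_eq_getElem]
    · apply List.getElem_replicate
    · rw [List.length_replicate]; omega
  have hucost : configCost unif st.cfg nc ≤ 1 := configCost_update_le _ _ _
  have hjunc : configCost unif ((olist st).getD L cf0) nc ≤ Dst st + 1 := by
    calc configCost unif ((olist st).getD L cf0) nc
        ≤ configCost unif ((olist st).getD L cf0) st.cfg + configCost unif st.cfg nc :=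
          configCost_triangle _ _ _
      _ ≤ Dst st + 1 := by
          rw [Dst, olast]
          exact add_le_add le_rfl hucost
  rcases Nat.eq_zero_or_pos m with hm0 | hmpos
  · -- no new requests this phase
    have hoff : offF (endPh st) = offF st := by
      rw [offF, offF, hople, hm0, Nat.add_zero]
      apply Finset.sum_congr rfl
      intro t ht
      rw [Finset.mem_range] at ht
      rw [g1 t (by omega), g1 (t+1) (by omega)]
    have hDst : Dst (endPh st) ≤ Dst st + 1 := by
      have hidx : (endPh st).oplan.length = L := by omega
      rw [Dst, olast, hidx, endPh_cfg, g1 L le_rfl]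
      exact hjunc
    linarith
  · have hoff : offF (endPh st) ≤ offF st + (Dst st + 1) := by
      rw [offF, hople, Finset.range_eq_Ico,
        ← Finset.sum_Ico_consecutive _ (Nat.zero_le L) (by omega : L ≤ L + m),
        ← Finset.sum_Ico_consecutive _ (by omega : L ≤ L + 1) (by omega : L + 1 ≤ L + m)]
      have e1 : ∑ t ∈ Finset.Ico 0 L,
          configCost unif ((olist (endPh st)).getD t cf0) ((olist (endPh st)).getD (t+1) cf0)
          = offF st := by
        rw [offF, Finset.range_eq_Ico, ← hL]
        apply Finset.sum_congr rfl
        intro t ht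
        rw [Finset.mem_Ico] at ht
        rw [g1 t (by omega), g1 (t+1) (by omega)]
      have e2 : ∑ t ∈ Finset.Ico L (L+1),
          configCost unif ((olist (endPh st)).getD t cf0) ((olist (endPh st)).getD (t+1) cf0)
          ≤ Dst st + 1 := by
        have hsing : Finset.Ico L (L+1) = {L} := by
          ext x
          simp only [Finset.mem_Ico, Finset.mem_singleton]
          omega
        rw [hsing, Finset.sum_singleton, g1 L le_rfl, g2 (L+1) le_rfl (by omega)]
        exact hjunc
      have e3 : ∑ t ∈ Finset.Ico (L+1) (L+m),
          configCost unif ((olist (endPh st)).getD t cf0) ((olist (endPh st)).getD (t+1) cf0)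
          = 0 := by
        apply Finset.sum_eq_zero
        intro t ht
        rw [Finset.mem_Ico] at ht
        rw [g2 t (by omega) (by omega), g2 (t+1) (by omega) (by omega)]
        exact configCost_self _
      rw [e1, e3]
      linarith
    have hDst : Dst (endPh st) = 0 := by
      rw [Dst, olast, hople, endPh_cfg, g2 (L+m) (by omega) le_rfl]
      exact configCost_self _
    linarith

lemma off_phase : ∀ (f : ℕ) (st : St k), Inv st →
    offF (phase A f st) + Dst (phase A f st) ≤ offF st + Dst st + 1 := by
  intro f
  induction f with
  | zero => intro st hinv; exact off_endPh hinv
  | succ f ih =>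
    intro st hinv
    rw [phase]
    cases hr : stepReq A st with
    | none => exact off_endPh hinv
    | some r =>
      have h1 := ih (doStep st r) (inv_doStep A hinv hr)
      obtain ⟨e1, e2⟩ := off_doStep st r
      rw [e1, e2] at h1
      exact h1

lemma off_run (n : ℕ) : offF (run A n) + Dst (run A n) ≤ n := by
  induction n with
  | zero =>
    have h1 : offF (run A (0:ℕ)) = 0 := by
      rw [offF]
      have : (run A (0:ℕ)).oplan.length = 0 := rfl
      rw [this]
      simp
    have h2 : Dst (run A (0:ℕ)) = 0 := by
      rw [Dst]
      have : (run A (0:ℕ)).cfg = olast (run A (0:ℕ)) := rfl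
      rw [← this]
      exact configCost_self _
    rw [h1, h2]
    norm_num
  | succ n ih =>
    have h := off_phase A (4*k) (run A n) (inv_run A n)
    rw [← run_succ] at h
    push_cast
    linarith

/-! ### the offline sequence serves the request sequence -/

lemma serves_seq (N : ℕ) :
    ServesSeq (c0 : Cfg k) (run A N).hist (fun t => (olist (run A N)).getD t cf0) := by
  constructor
  · rfl
  · intro i
    have hlen := oplan_len_run A N
    have hi : (i:ℕ) < (run A N).oplan.length := by rw [hlen]; exact i.isLt
    have hs := (inv_run A N).serve (i:ℕ) hi
    have e1 : (olist (run A N)).getD ((i:ℕ)+1) cf0 = (run A N).oplan.getD (i:ℕ) cf0 := by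
      rw [olist, List.getD_cons_succ]
    have e2 : (run A N).hist.get i = (run A N).hist.getD (i:ℕ) rq0 := by
      rw [List.getD_eq_getElem _ _ i.isLt, List.get_eq_getElem]
    show Serves ((olist (run A N)).getD ((i:ℕ)+1) cf0) ((run A N).hist.get i)
    rw [e1, e2]
    exact hs

lemma offlineCost_eq (N : ℕ) :
    offlineCost unif (run A N).hist (fun t => (olist (run A N)).getD t cf0)
      = offF (run A N) := by
  rw [offlineCost, offF, oplan_len_run]

lemma algCost_eq (N : ℕ) :
    algCost unif A c0 (run A N).hist
      = costR A (run A N).hist 0 (run A N).hist.length := by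
  rw [algCost, costR, Finset.range_eq_Ico]

end LB
/-- Every deterministic online algorithm for the `k`-Server with Preferences Problem
on the uniform metric on a set of `k+1` points has competitive ratio at least `2k - 1`. -/
theorem lower_bound_two_k_sub_one (k : ℕ) (hk : 2 ≤ k)
    (A : Alg (Fin k) (Fin (k + 1))) (hA : IsOnline A)
    (c' a : ℝ) (hc' : c' < 2 * k - 1) :
    ∃ (c₀ : Fin k → Fin (k + 1)) (σ : List (Request (Fin k) (Fin (k + 1)))),
      c' * OPT unif c₀ σ + a < algCost unif A c₀ σ := by
  haveI : NeZero k := ⟨by omega⟩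
  -- arithmetic setup
  have hk2 : (2:ℝ) ≤ (k:ℝ) := by exact_mod_cast hk
  set M : ℝ := max c' 0 with hM
  have hM0 : 0 ≤ M := le_max_right _ _
  have hMlt : M < 2*(k:ℝ) - 1 := max_lt hc' (by linarith)
  set d : ℝ := 2*(k:ℝ) - 1 - M with hd
  have hdpos : 0 < d := by simp only [hd]; linarith
  obtain ⟨N, hN⟩ := exists_nat_gt (a / d)
  have haN : a < N * d := (div_lt_iff₀ hdpos).mp hN
  refine ⟨c0, (run A N).hist, ?_⟩
  set σ := (run A N).hist with hσ
  set os : ℕ → Cfg k := fun t => (olist (run A N)).getD t cf0 with hos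
  -- the offline witness
  have hserves : ServesSeq c0 σ os := serves_seq A N
  have hoffeq : offlineCost unif σ os = offF (run A N) := offlineCost_eq A N
  have hmem : offF (run A N) ∈ {x | ∃ os, ServesSeq c0 σ os ∧ offlineCost unif σ os = x} :=
    ⟨os, hserves, hoffeq⟩
  have hbdd : BddBelow {x | ∃ os, ServesSeq c0 σ os ∧ offlineCost unif σ os = x} := by
    refine ⟨0, ?_⟩
    rintro x ⟨os', _, rfl⟩
    exact Finset.sum_nonneg fun _ _ => configCost_nonneg _ _
  -- OPT bounds
  have hOPT_le : OPT unif c0 σ ≤ (N:ℝ) := by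
    have h1 : OPT unif c0 σ ≤ offF (run A N) := csInf_le hbdd hmem
    have h2 := off_run A N
    have h3 := Dst_nonneg (run A N)
    linarith
  have hOPT_nonneg : 0 ≤ OPT unif c0 σ := by
    apply le_csInf ⟨_, hmem⟩
    rintro x ⟨os', _, rfl⟩
    exact Finset.sum_nonneg fun _ _ => configCost_nonneg _ _
  -- online lower bound
  have hALG : (2*(k:ℝ)-1) * N ≤ algCost unif A c0 σ := by
    have h1 := run_bound A hA N N le_rfl
    have h2 := phi_nonneg A (run A N)
    rw [algCost_eq]
    linarith
  -- conclude
  have hc1 : c' * OPT unif c0 σ ≤ M * OPT unif c0 σ :=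
    mul_le_mul_of_nonneg_right (le_max_left _ _) hOPT_nonneg
  have hc2 : M * OPT unif c0 σ ≤ M * N := mul_le_mul_of_nonneg_left hOPT_le hM0
  have hfin : M * N + a < (2*(k:ℝ)-1) * N := by
    have : (N:ℝ) * d = (2*(k:ℝ)-1) * N - M * N := by rw [hd]; ring
    linarith
  linarith

end KServerPref
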